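/- (Unitarity and cross-unitarity of the spin-type Lax operator.) Let F = Σ_{i,j=1}^{2n} e_{ij} ⊗ F_{ij} be a 2n×2n matrix over 𝒜 such that F^t = −F (equivalently F_{ij} + θ_{ij} F_{j̄ ī} = 0 for all i, j) and F² = k(k+κ) I + κ F for some scalar k ∈ ℂ. Then the Lax operator ℒ(u) := I + F/(u − κ/2) satisfies ℒ(u) ℒ(−u) = ℒ(u) ℒ^t(u+κ) = ℒ^t(u+κ) ℒ(u) = ((u² − (k + κ/2)²)/(u² − κ²/4)) · I, where ℒ^t denotes the transposition t applied to the End(ℂ^{2n}) factor. -/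
import Mathlib


open Matrix

noncomputable section

def theta (n : ℕ) (ε : ℂ) (i : Fin (2 * n)) : ℂ := if (i : ℕ) < n then ε else 1

def bar {m : ℕ} (i : Fin m) : Fin m := i.rev

def kap (n : ℕ) (ε : ℂ) : ℂ := (n : ℂ) - ε

/-- the transposition `t`, `(e_{ij})^t = θ_{ij} e_{j̄ ī}`, applied to a matrix with
entries in a `ℂ`-algebra -/
def tpA (n : ℕ) (ε : ℂ) {A : Type*} [Ring A] [Algebra ℂ A]
    (M : Matrix (Fin (2*n)) (Fin (2*n)) A) : Matrix (Fin (2*n)) (Fin (2*n)) A :=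
  Matrix.of fun i j => (theta n ε i * theta n ε j) • M (bar j) (bar i)

/-- the Lax operator `ℒ(u) = I + F/(u - κ/2)` -/
def LaxM (n : ℕ) (ε : ℂ) {A : Type*} [Ring A] [Algebra ℂ A]
    (F : Matrix (Fin (2*n)) (Fin (2*n)) A) (u : ℂ) :
    Matrix (Fin (2*n)) (Fin (2*n)) A :=
  (1 : Matrix (Fin (2*n)) (Fin (2*n)) A) + (u - kap n ε / 2)⁻¹ • F

theorem statement17 (n : ℕ) (hn : 1 ≤ n) (ε : ℂ) (hε : ε = 1 ∨ ε = -1) (k : ℂ)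
    {A : Type*} [Ring A] [Algebra ℂ A]
    (F : Matrix (Fin (2*n)) (Fin (2*n)) A)
    -- F^t = -F
    (hFt : tpA n ε F = -F)
    -- F² = k(k+κ) I + κ F
    (hsq : F * F
      = (k * (k + kap n ε)) • (1 : Matrix (Fin (2*n)) (Fin (2*n)) A) + kap n ε • F)
    (u : ℂ) (h1 : u - kap n ε / 2 ≠ 0) (h2 : u + kap n ε / 2 ≠ 0) :
    LaxM n ε F u * LaxM n ε F (-u)
        = ((u^2 - (k + kap n ε / 2)^2) / (u^2 - (kap n ε)^2 / 4)) •
            (1 : Matrix (Fin (2*n)) (Fin (2*n)) A)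
    ∧ LaxM n ε F u * tpA n ε (LaxM n ε F (u + kap n ε))
        = ((u^2 - (k + kap n ε / 2)^2) / (u^2 - (kap n ε)^2 / 4)) •
            (1 : Matrix (Fin (2*n)) (Fin (2*n)) A)
    ∧ tpA n ε (LaxM n ε F (u + kap n ε)) * LaxM n ε F u
        = ((u^2 - (k + kap n ε / 2)^2) / (u^2 - (kap n ε)^2 / 4)) •
            (1 : Matrix (Fin (2*n)) (Fin (2*n)) A) := by
  set κ := kap n ε with hκ
  -- θ_i² = 1
  have hθ : ∀ i : Fin (2*n), theta n ε i * theta n ε i = 1 := by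
    intro i
    unfold theta
    rcases hε with h | h <;> split <;> simp [h]
  -- tpA 1 = 1
  have htp1 : tpA n ε (1 : Matrix (Fin (2*n)) (Fin (2*n)) A) = 1 := by
    ext i j
    simp only [tpA, Matrix.of_apply, Matrix.one_apply]
    by_cases h : i = j
    · subst h
      simp [hθ i]
    · have hb : bar j ≠ bar i := by
        intro hc
        exact h ((Fin.rev_injective hc).symm)
      simp [h, hb]
  -- tpA of the Lax operator at u + κ equals the Lax operator at -u
  have htpL : tpA n ε (LaxM n ε F (u + κ)) = LaxM n ε F (-u) := by
    have hadd : ∀ M N : Matrix (Fin (2*n)) (Fin (2*n)) A,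
        tpA n ε (M + N) = tpA n ε M + tpA n ε N := by
      intro M N; ext i j; simp [tpA, smul_add]
    have hsmul : ∀ (c : ℂ) (M : Matrix (Fin (2*n)) (Fin (2*n)) A),
        tpA n ε (c • M) = c • tpA n ε M := by
      intro c M; ext i j; simp [tpA, smul_comm c]
    have e1 : (u + κ - κ / 2) = u + κ / 2 := by ring
    have e2 : (-u - κ / 2)⁻¹ = -(u + κ / 2)⁻¹ := by
      rw [show -u - κ/2 = -(u + κ/2) by ring, inv_neg]
    unfold LaxM
    rw [← hκ, e1, hadd, hsmul, htp1, hFt, e2]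
    simp [smul_neg]
  -- key computation
  have key : ∀ a b : ℂ, a + b + a * b * κ = 0 →
      ((1 : Matrix (Fin (2*n)) (Fin (2*n)) A) + a • F) * (1 + b • F)
        = (1 + a * b * (k * (k + κ))) • (1 : Matrix (Fin (2*n)) (Fin (2*n)) A) := by
    intro a b hab
    have expand : ((1 : Matrix (Fin (2*n)) (Fin (2*n)) A) + a • F) * (1 + b • F)
        = 1 + (a + b) • F + (a * b) • (F * F) := by
      simp only [add_mul, mul_add, one_mul, mul_one, smul_mul_smul_comm, add_smul]
      abel
    have hz : (a + b) • F + (a * b * κ) • F = 0 := by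
      rw [← add_smul, hab, zero_smul]
    rw [expand, hsq, smul_add, smul_smul, smul_smul]
    conv_rhs => rw [add_smul, one_smul]
    calc (1 : Matrix (Fin (2*n)) (Fin (2*n)) A) + (a + b) • F
            + ((a * b * (k * (k + κ))) • (1 : Matrix (Fin (2*n)) (Fin (2*n)) A)
              + (a * b * κ) • F)
        = 1 + (a * b * (k * (k + κ))) • (1 : Matrix (Fin (2*n)) (Fin (2*n)) A)
            + ((a + b) • F + (a * b * κ) • F) := by abel
      _ = (1 : Matrix (Fin (2*n)) (Fin (2*n)) A)
            + (a * b * (k * (k + κ))) • (1 : Matrix (Fin (2*n)) (Fin (2*n)) A) := by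
          rw [hz, add_zero]
  set a : ℂ := (u - κ / 2)⁻¹ with ha
  set b : ℂ := (-u - κ / 2)⁻¹ with hb
  have h3 : -u - κ / 2 ≠ 0 := by
    intro h; apply h2; linear_combination -h
  have ha1 : a * (u - κ / 2) = 1 := inv_mul_cancel₀ h1
  have hb1 : b * (-u - κ / 2) = 1 := inv_mul_cancel₀ h3
  have hab : a + b + a * b * κ = 0 := by
    linear_combination (-a) * hb1 + (-b) * ha1
  have hba : b + a + b * a * κ = 0 := by linear_combination hab
  have hd : u ^ 2 - κ ^ 2 / 4 ≠ 0 := by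
    intro h
    apply h1
    have hm : (u - κ / 2) * (u + κ / 2) = 0 := by linear_combination h
    rcases mul_eq_zero.mp hm with h' | h'
    · exact h'
    · exact absurd h' h2
  have hmul : (a * (u - κ / 2)) * (b * (-u - κ / 2)) = 1 := by rw [ha1, hb1, one_mul]
  have habd : a * b * (u ^ 2 - κ ^ 2 / 4) = -1 := by linear_combination -hmul
  have hscal : 1 + a * b * (k * (k + κ))
      = (u ^ 2 - (k + κ / 2) ^ 2) / (u ^ 2 - κ ^ 2 / 4) := by
    rw [eq_div_iff hd]
    linear_combination (k * (k + κ)) * habd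
  have hL1 : LaxM n ε F u = 1 + a • F := by rw [LaxM, ← hκ, ha]
  have hL2 : LaxM n ε F (-u) = 1 + b • F := by rw [LaxM, ← hκ, hb]
  have main1 : LaxM n ε F u * LaxM n ε F (-u)
      = ((u ^ 2 - (k + κ / 2) ^ 2) / (u ^ 2 - κ ^ 2 / 4)) •
          (1 : Matrix (Fin (2*n)) (Fin (2*n)) A) := by
    rw [hL1, hL2, key a b hab, hscal]
  have main2 : LaxM n ε F (-u) * LaxM n ε F u
      = ((u ^ 2 - (k + κ / 2) ^ 2) / (u ^ 2 - κ ^ 2 / 4)) •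
          (1 : Matrix (Fin (2*n)) (Fin (2*n)) A) := by
    rw [hL2, hL1, key b a hba, show b * a = a * b by ring, hscal]
  exact ⟨main1, by rw [htpL]; exact main1, by rw [htpL]; exact main2⟩
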